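/- Mass bound for the pointwise maximum of shifted Gaussian densities (key claim in the Gaussian minimax lower bound, Proposition part (i)): Let n and m be positive integers, let c ∈ (0, 1/4], let α ∈ (0, 2^{−1/(2c²)}], let v₁, …, v_m be unit vectors in ℝⁿ, and set μ_i = 2c·√(ln(1/α))·v_i for each i. Let g_μ denote the density of N(μ, I) on ℝⁿ. Then ∫_{ℝⁿ} max_{1 ≤ i ≤ m} g_{μ_i}(x) dx ≤ 1/(2α) + 2m·α^{1/(32c²)}. -/
import Mathlib

open MeasureTheory Real Complex
open scoped RealInnerProductSpace

section Aux
variable {n : ℕ}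

lemma integrable_rexp_gauss_lin (w : EuclideanSpace ℝ (Fin n)) :
    Integrable (fun x : EuclideanSpace ℝ (Fin n) ↦
      Real.exp (-(1/2) * ‖x‖^2 + ⟪w, x⟫)) := by
  have h := (GaussianFourier.integrable_cexp_neg_mul_sq_norm_add
    (V := EuclideanSpace ℝ (Fin n)) (b := (1/2 : ℂ)) (by norm_num) 1 w).re
  refine h.congr (Filter.Eventually.of_forall fun x => ?_)
  have h2 : (-(1/2 : ℂ) * (‖x‖:ℂ)^2 + 1 * ((⟪w, x⟫ : ℝ) : ℂ)) =
      ((-(1/2) * ‖x‖^2 + ⟪w, x⟫ : ℝ) : ℂ) := by push_cast; ring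
  simp only [RCLike.inner_apply, conj_trivial] at h2 ⊢
  rw [h2]
  exact Complex.exp_ofReal_re _

lemma integral_rexp_gauss_lin (w : EuclideanSpace ℝ (Fin n)) :
    ∫ x : EuclideanSpace ℝ (Fin n), Real.exp (-(1/2) * ‖x‖^2 + ⟪w, x⟫) =
      (2 * π) ^ ((n:ℝ)/2) * Real.exp (‖w‖^2 / 2) := by
  have h := GaussianFourier.integral_cexp_neg_mul_sq_norm_add
    (V := EuclideanSpace ℝ (Fin n)) (b := (1/2 : ℂ)) (by norm_num) 1 w
  have h2 : ∀ x : EuclideanSpace ℝ (Fin n),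
      ((Real.exp (-(1/2) * ‖x‖^2 + ⟪w, x⟫) : ℝ) : ℂ) =
      Complex.exp (-(1/2 : ℂ) * (‖x‖:ℂ)^2 + 1 * ((⟪w, x⟫ : ℝ) : ℂ)) := by
    intro x
    rw [Complex.ofReal_exp]
    congr 1
    push_cast; ring
  rw [← Complex.ofReal_inj]
  calc ((∫ x : EuclideanSpace ℝ (Fin n), Real.exp (-(1/2) * ‖x‖^2 + ⟪w, x⟫) : ℝ) : ℂ)
      = ∫ x : EuclideanSpace ℝ (Fin n),
          ((Real.exp (-(1/2) * ‖x‖^2 + ⟪w, x⟫) : ℝ) : ℂ) := (integral_ofReal (𝕜 := ℂ)).symm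
    _ = ∫ x : EuclideanSpace ℝ (Fin n),
          Complex.exp (-(1/2 : ℂ) * (‖x‖:ℂ)^2 + 1 * ((⟪w, x⟫ : ℝ) : ℂ)) := by
        exact integral_congr_ae (Filter.Eventually.of_forall fun x => h2 x)
    _ = ((2 * π : ℝ) : ℂ) ^ ((n : ℂ) / 2) * Complex.exp ((‖w‖^2 / 2 : ℝ) : ℂ) := by
        rw [h, finrank_euclideanSpace_fin]
        congr 1
        · congr 1
          push_cast; ring
        · congr 1
          push_cast; ring
    _ = (((2 * π) ^ ((n:ℝ)/2) * Real.exp (‖w‖^2 / 2) : ℝ) : ℂ) := by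
        push_cast [Complex.ofReal_cpow (by positivity : (0:ℝ) ≤ 2*π), Complex.ofReal_exp]
        norm_num

end Aux

/-- The density of the Gaussian `N(μ, I)` on `ℝⁿ`. -/
noncomputable def gaussianPdf (n : ℕ) (μ : EuclideanSpace ℝ (Fin n))
    (x : EuclideanSpace ℝ (Fin n)) : ℝ :=
  (2 * Real.pi) ^ (-(n : ℝ) / 2) * Real.exp (-‖x - μ‖ ^ 2 / 2)

lemma gaussianPdf_nonneg (n : ℕ) (μ x : EuclideanSpace ℝ (Fin n)) :
    0 ≤ gaussianPdf n μ x := by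
  unfold gaussianPdf; positivity

lemma gaussianPdf_mul_eq (n : ℕ) (μ u : EuclideanSpace ℝ (Fin n)) (d : ℝ)
    (x : EuclideanSpace ℝ (Fin n)) :
    gaussianPdf n μ x * Real.exp (d * ⟪u, x⟫) =
      ((2 * π) ^ (-(n:ℝ)/2) * Real.exp (-‖μ‖^2/2)) *
        Real.exp (-(1/2) * ‖x‖^2 + ⟪μ + d • u, x⟫) := by
  unfold gaussianPdf
  rw [mul_assoc, ← Real.exp_add, mul_assoc, ← Real.exp_add]
  congr 2
  rw [norm_sub_sq_real, real_inner_comm μ x, inner_add_left, real_inner_smul_left]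
  ring

lemma integrable_gaussianPdf_mul (n : ℕ) (μ u : EuclideanSpace ℝ (Fin n)) (d : ℝ) :
    Integrable (fun x => gaussianPdf n μ x * Real.exp (d * ⟪u, x⟫)) := by
  simp_rw [gaussianPdf_mul_eq]
  exact (integrable_rexp_gauss_lin _).const_mul _

lemma integral_gaussianPdf_mul (n : ℕ) (μ u : EuclideanSpace ℝ (Fin n)) (d : ℝ) :
    ∫ x, gaussianPdf n μ x * Real.exp (d * ⟪u, x⟫) =
      Real.exp ((‖μ + d • u‖^2 - ‖μ‖^2) / 2) := by
  simp_rw [gaussianPdf_mul_eq]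
  rw [integral_const_mul, integral_rexp_gauss_lin]
  have h1 : (2*π) ^ (-(n:ℝ)/2) * (2*π) ^ ((n:ℝ)/2) = 1 := by
    rw [← Real.rpow_add (by positivity)]
    rw [show -(n:ℝ)/2 + (n:ℝ)/2 = 0 by ring, Real.rpow_zero]
  calc (2*π) ^ (-(n:ℝ)/2) * Real.exp (-‖μ‖^2/2) *
        ((2*π) ^ ((n:ℝ)/2) * Real.exp (‖μ + d • u‖^2/2))
      = ((2*π) ^ (-(n:ℝ)/2) * (2*π) ^ ((n:ℝ)/2)) *
          (Real.exp (-‖μ‖^2/2) * Real.exp (‖μ + d • u‖^2/2)) := by ring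
    _ = Real.exp (-‖μ‖^2/2) * Real.exp (‖μ + d • u‖^2/2) := by rw [h1, one_mul]
    _ = Real.exp ((‖μ + d • u‖^2 - ‖μ‖^2) / 2) := by
        rw [← Real.exp_add]; congr 1; ring

lemma integrable_gaussianPdf (n : ℕ) (μ : EuclideanSpace ℝ (Fin n)) :
    Integrable (gaussianPdf n μ) := by
  have h := integrable_gaussianPdf_mul n μ 0 0
  refine h.congr (Filter.Eventually.of_forall fun x => ?_)
  simp

lemma integral_gaussianPdf (n : ℕ) (μ : EuclideanSpace ℝ (Fin n)) :
    ∫ x, gaussianPdf n μ x = 1 := by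
  have h := integral_gaussianPdf_mul n μ 0 0
  simp only [zero_mul, Real.exp_zero, mul_one, zero_smul, add_zero, sub_self,
    zero_div] at h
  exact h

set_option maxHeartbeats 1000000 in
/-- Mass bound for the pointwise maximum of shifted Gaussian densities: with
`μᵢ = 2c √(ln(1/α)) vᵢ` for unit vectors `vᵢ`, `c ∈ (0,1/4]` and `α ≤ 2^{-1/(2c²)}`,
`∫ max_i g_{μᵢ} ≤ 1/(2α) + 2m α^{1/(32c²)}`. -/
theorem stmt_16 (n m : ℕ) (hn : 0 < n) (hm : 0 < m) (c α : ℝ)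
    (hc0 : 0 < c) (hc : c ≤ 1 / 4) (hα0 : 0 < α)
    (hα : α ≤ (2 : ℝ) ^ (-(1 / (2 * c ^ 2))))
    (v : Fin m → EuclideanSpace ℝ (Fin n)) (hv : ∀ i, ‖v i‖ = 1)
    (μ : Fin m → EuclideanSpace ℝ (Fin n))
    (hμ : ∀ i, μ i = (2 * c * Real.sqrt (Real.log (1 / α))) • v i) :
    (∫ x, ⨆ i, gaussianPdf n (μ i) x) ≤
      1 / (2 * α) + 2 * m * α ^ (1 / (32 * c ^ 2)) := by
  haveI : Nonempty (Fin m) := ⟨⟨0, hm⟩⟩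
  have hα1 : α ≤ 1 := by
    refine hα.trans (Real.rpow_le_one_of_one_le_of_nonpos (by norm_num) ?_)
    have : (0:ℝ) ≤ 1 / (2 * c ^ 2) := by positivity
    linarith
  set L := Real.log (1 / α) with hLdef
  have hL : 0 ≤ L := by
    rw [hLdef, one_div, Real.log_inv]
    linarith [Real.log_nonpos hα0.le hα1]
  set s := Real.sqrt L with hsdef
  have hs0 : 0 ≤ s := Real.sqrt_nonneg _
  have hs2 : s ^ 2 = L := Real.sq_sqrt hL
  set r := 2 * c * s with hrdef
  set T := s / (2 * c) with hTdef
  have hr0 : 0 ≤ r := by positivity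
  have hrT : r ≤ T := by
    rw [hTdef, le_div_iff₀ (by positivity)]
    nlinarith
  have hT0 : 0 ≤ T := hr0.trans hrT
  have hμnorm : ∀ i, ‖μ i‖ = r := by
    intro i
    rw [hμ i, norm_smul, hv i, mul_one, Real.norm_eq_abs, _root_.abs_of_nonneg hr0]
  have hinner : ∀ i (x : EuclideanSpace ℝ (Fin n)), ⟪μ i, x⟫ = r * ⟪v i, x⟫ := by
    intro i x
    rw [hμ i, real_inner_smul_left]
  -- pointwise representation
  have hrep : ∀ i (x : EuclideanSpace ℝ (Fin n)),
      gaussianPdf n (μ i) x = gaussianPdf n 0 x * Real.exp (r * ⟪v i, x⟫ - r ^ 2 / 2) := by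
    intro i x
    unfold gaussianPdf
    rw [mul_assoc, ← Real.exp_add]
    congr 1
    rw [norm_sub_sq_real, real_inner_comm (μ i) x, hinner i x, sub_zero]
    rw [show ‖μ i‖ ^ 2 = r ^ 2 by rw [hμnorm i]]
    ring
  set C1 := Real.exp (r * T - r ^ 2 / 2) with hC1def
  have hC1pos : 0 < C1 := Real.exp_pos _
  set F : EuclideanSpace ℝ (Fin n) → ℝ := fun x =>
    C1 * gaussianPdf n 0 x +
      ∑ j, gaussianPdf n (μ j) x * Real.exp ((T - r) * (⟪v j, x⟫ - T)) with hFdef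
  have hFbound : ∀ x, (⨆ i, gaussianPdf n (μ i) x) ≤ F x := by
    intro x
    refine ciSup_le fun i => ?_
    by_cases hx : ⟪v i, x⟫ ≤ T
    · have h1 : gaussianPdf n (μ i) x ≤ C1 * gaussianPdf n 0 x := by
        rw [hrep i x, mul_comm]
        refine mul_le_mul_of_nonneg_right ?_ (gaussianPdf_nonneg n 0 x)
        rw [hC1def]
        apply Real.exp_le_exp.mpr
        nlinarith
      refine h1.trans (le_add_of_nonneg_right ?_)
      exact Finset.sum_nonneg fun j _ =>
        mul_nonneg (gaussianPdf_nonneg n (μ j) x) (Real.exp_nonneg _)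
    · push_neg at hx
      have h1 : gaussianPdf n (μ i) x ≤
          gaussianPdf n (μ i) x * Real.exp ((T - r) * (⟪v i, x⟫ - T)) := by
        nth_rewrite 1 [← mul_one (gaussianPdf n (μ i) x)]
        refine mul_le_mul_of_nonneg_left ?_ (gaussianPdf_nonneg n (μ i) x)
        rw [← Real.exp_zero]
        apply Real.exp_le_exp.mpr
        have h2 : 0 ≤ T - r := by linarith
        have h3 : 0 ≤ ⟪v i, x⟫ - T := by linarith
        positivity
      refine h1.trans ?_
      have h2 : gaussianPdf n (μ i) x * Real.exp ((T - r) * (⟪v i, x⟫ - T)) ≤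
          ∑ j, gaussianPdf n (μ j) x * Real.exp ((T - r) * (⟪v j, x⟫ - T)) :=
        Finset.single_le_sum
          (f := fun j => gaussianPdf n (μ j) x * Real.exp ((T - r) * (⟪v j, x⟫ - T)))
          (fun j _ => mul_nonneg (gaussianPdf_nonneg n (μ j) x) (Real.exp_nonneg _))
          (Finset.mem_univ i)
      refine h2.trans (le_add_of_nonneg_left ?_)
      exact mul_nonneg hC1pos.le (gaussianPdf_nonneg n 0 x)
  -- integrability of each summand
  have hsummand : ∀ j, (fun x : EuclideanSpace ℝ (Fin n) =>
      gaussianPdf n (μ j) x * Real.exp ((T - r) * (⟪v j, x⟫ - T))) =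
      fun x => Real.exp (-(T - r) * T) *
        (gaussianPdf n (μ j) x * Real.exp ((T - r) * ⟪v j, x⟫)) := by
    intro j
    funext x
    rw [show (T - r) * (⟪v j, x⟫ - T) = (-(T - r) * T) + (T - r) * ⟪v j, x⟫ by ring,
      Real.exp_add]
    ring
  have hintj : ∀ j, Integrable (fun x : EuclideanSpace ℝ (Fin n) =>
      gaussianPdf n (μ j) x * Real.exp ((T - r) * (⟪v j, x⟫ - T))) := by
    intro j
    rw [hsummand j]
    exact (integrable_gaussianPdf_mul n (μ j) (v j) (T - r)).const_mul _
  have hintF : Integrable F := by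
    rw [hFdef]
    exact ((integrable_gaussianPdf n 0).const_mul C1).add
      (integrable_finset_sum _ fun j _ => hintj j)
  -- integral of each summand
  have hIj : ∀ j, ∫ x, gaussianPdf n (μ j) x * Real.exp ((T - r) * (⟪v j, x⟫ - T)) =
      Real.exp (-(T - r) ^ 2 / 2) := by
    intro j
    rw [hsummand j, integral_const_mul, integral_gaussianPdf_mul]
    have hw : μ j + (T - r) • v j = T • v j := by
      rw [hμ j, ← add_smul]
      congr 1
      ring
    rw [hw, norm_smul, hv j, mul_one, Real.norm_eq_abs, _root_.abs_of_nonneg hT0, hμnorm j,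
      ← Real.exp_add]
    congr 1
    ring
  have hIF : ∫ x, F x = C1 + m * Real.exp (-(T - r) ^ 2 / 2) := by
    rw [hFdef]
    rw [integral_add ((integrable_gaussianPdf n 0).const_mul C1)
      (integrable_finset_sum _ fun j _ => hintj j)]
    rw [integral_const_mul, integral_gaussianPdf, mul_one]
    rw [integral_finset_sum _ fun j _ => hintj j]
    congr 1
    simp_rw [hIj]
    rw [Finset.sum_const, Finset.card_univ, Fintype.card_fin, nsmul_eq_mul]
  have hmono : (∫ x, ⨆ i, gaussianPdf n (μ i) x) ≤ ∫ x, F x := by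
    refine integral_mono_of_nonneg (Filter.Eventually.of_forall fun x => ?_) hintF
      (Filter.Eventually.of_forall fun x => hFbound x)
    exact le_ciSup_of_le (Set.Finite.bddAbove (Set.finite_range _)) ⟨0, hm⟩
      (gaussianPdf_nonneg n (μ ⟨0, hm⟩) x)
  -- arithmetic facts
  have hc2 : (0:ℝ) < c ^ 2 := by positivity
  have hrTL : r * T = L := by
    rw [hrdef, hTdef]
    field_simp
    nlinarith
  have hr2 : r ^ 2 = 4 * c ^ 2 * L := by
    rw [hrdef]
    nlinarith
  have hexpL : Real.exp L = 1 / α := Real.exp_log (by positivity)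
  have hlogα : Real.log α = -L := by
    rw [hLdef, one_div, Real.log_inv]
    ring
  -- bound C1
  have hC1bound : C1 ≤ 1 / (2 * α) := by
    have h1 : C1 = (1 / α) * α ^ (2 * c ^ 2 : ℝ) := by
      rw [hC1def, Real.rpow_def_of_pos hα0, hlogα, ← hexpL, ← Real.exp_add]
      congr 1
      rw [hrTL, hr2]
      ring
    have h2 : α ^ (2 * c ^ 2 : ℝ) ≤ 1 / 2 := by
      calc α ^ (2 * c ^ 2 : ℝ)
          ≤ ((2:ℝ) ^ (-(1 / (2 * c ^ 2)))) ^ (2 * c ^ 2 : ℝ) :=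
            Real.rpow_le_rpow hα0.le hα (by positivity)
        _ = (2:ℝ) ^ ((-(1 / (2 * c ^ 2))) * (2 * c ^ 2)) :=
            (Real.rpow_mul (by norm_num) _ _).symm
        _ = (2:ℝ) ^ (-1 : ℝ) := by
            congr 1
            field_simp
        _ = 1 / 2 := by
            rw [Real.rpow_neg_one]
            norm_num
    rw [h1]
    calc (1 / α) * α ^ (2 * c ^ 2 : ℝ) ≤ (1 / α) * (1 / 2) :=
          mul_le_mul_of_nonneg_left h2 (by positivity)
      _ = 1 / (2 * α) := by ring
  -- bound the tail term
  have hTail : Real.exp (-(T - r) ^ 2 / 2) ≤ α ^ (1 / (32 * c ^ 2) : ℝ) := by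
    rw [Real.rpow_def_of_pos hα0, hlogα]
    apply Real.exp_le_exp.mpr
    have hTr : T - r = s * (1 - 4 * c ^ 2) / (2 * c) := by
      rw [hTdef, hrdef]
      field_simp
      ring
    have h14 : (1:ℝ) / 2 ≤ 1 - 4 * c ^ 2 := by nlinarith
    have hexpand : (T - r) ^ 2 = L * (1 - 4 * c ^ 2) ^ 2 / (4 * c ^ 2) := by
      rw [hTr, div_pow, mul_pow, hs2]
      congr 1
      ring
    have h15 : (1:ℝ)/4 ≤ (1 - 4 * c ^ 2) ^ 2 := by nlinarith
    rw [hexpand,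
      show -(L * (1 - 4 * c ^ 2) ^ 2 / (4 * c ^ 2)) / 2
        = -(L * (1 - 4 * c ^ 2) ^ 2 / (8 * c ^ 2)) by ring,
      show -L * (1 / (32 * c ^ 2)) = -(L / (32 * c ^ 2)) by ring, neg_le_neg_iff]
    rw [div_le_div_iff₀ (by positivity) (by positivity)]
    nlinarith [mul_le_mul_of_nonneg_left h15 (mul_nonneg hL hc2.le), mul_nonneg hL hc2.le]
  -- conclude
  have hαpow : (0:ℝ) ≤ α ^ (1 / (32 * c ^ 2) : ℝ) := Real.rpow_nonneg hα0.le _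
  have hm0 : (0:ℝ) ≤ (m : ℝ) := Nat.cast_nonneg m
  calc (∫ x, ⨆ i, gaussianPdf n (μ i) x) ≤ ∫ x, F x := hmono
    _ = C1 + m * Real.exp (-(T - r) ^ 2 / 2) := hIF
    _ ≤ 1 / (2 * α) + 2 * m * α ^ (1 / (32 * c ^ 2)) := by
        have h3 : (m:ℝ) * Real.exp (-(T - r) ^ 2 / 2) ≤ (m:ℝ) * α ^ (1 / (32 * c ^ 2) : ℝ) :=
          mul_le_mul_of_nonneg_left hTail hm0
        nlinarith [mul_nonneg hm0 hαpow]
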